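/- Let H ⊆ GL₂(ℤ/9ℤ) be a subgroup whose image under the reduction map GL₂(ℤ/9ℤ) → GL₂(ℤ/3ℤ) is all of GL₂(ℤ/3ℤ), and suppose SL₂(ℤ/9ℤ) is not contained in H. Then 27 divides the index [GL₂(ℤ/9ℤ) : H]. -/

import Mathlib

open scoped MatrixGroups

/-- The map `GL₂(R) → GL₂(S)` induced by a ring homomorphism `R →+* S`. -/
abbrev glMap {R S : Type*} [CommRing R] [CommRing S] (f : R →+* S) :
    GL (Fin 2) R →* GL (Fin 2) S := Matrix.GeneralLinearGroup.map f

/-- `SL₂(R)` viewed as a subgroup of `GL₂(R)`. -/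
def SL2subgroup (R : Type*) [CommRing R] : Subgroup (GL (Fin 2) R) :=
  (Matrix.SpecialLinearGroup.toGL (n := Fin 2) (R := R)).range

/-
The kernel `K` of the reduction `GL₂(ℤ/9) → GL₂(ℤ/3)` consists of the matrices `1 + 3A`, and
`A ↦ 1 + 3A` is an isomorphism from the additive group `M₂(𝔽₃)` onto `K` (so `|K| = 81`) under
which conjugation by `u ∈ GL₂(ℤ/9)` becomes conjugation of `A` by the reduction of `u`. Since `H`
surjects onto `GL₂(𝔽₃)`, the set `{A | 1 + 3A ∈ H}` is an `SL₂(𝔽₃)`-stable additive subgroup of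
`M₂(𝔽₃)`, so it either consists of scalars or contains every trace-zero matrix. In the second case
`H` contains `K ∩ SL₂(ℤ/9)`; moreover the commutators of `H` have determinant `1` and map onto the
commutator subgroup of `GL₂(𝔽₃)`, which contains `SL₂(𝔽₃)`, so `SL₂(ℤ/9) ≤ H`. Hence
`|H ∩ K| ∣ 3`, and `[GL₂(ℤ/9) : H] = [K : H ∩ K] = 81 / |H ∩ K|`.
-/

open Matrix
open scoped commutatorElement

theorem Subgroup.index_mul_card_inf_ker {G G' : Type*} [Group G] [Group G'] [Finite G]
    (f : G →* G') {H : Subgroup G} (hH : H.map f = f.range) :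
    H.index * Nat.card (H ⊓ f.ker : Subgroup G) = Nat.card f.ker := by
  have hinf : (H ⊓ f.ker).index = f.ker.index * H.index := by
    rw [← relIndex_mul_index inf_le_left, inf_relIndex_left, relIndex_ker, hH, index_ker]
  have hG := index_mul_card (H ⊓ f.ker)
  rw [hinf, ← index_mul_card f.ker, mul_assoc] at hG
  exact Nat.eq_of_mul_eq_mul_left (Nat.pos_of_ne_zero index_ne_zero_of_finite) hG

lemma AddSubgroup.mem_of_zmod_smul_mem {p : ℕ} [Fact p.Prime] {M : Type*} [AddCommGroup M]
    [Module (ZMod p) M] {S : AddSubgroup M} {k : ZMod p} {x : M} (hk : k ≠ 0) (h : k • x ∈ S) :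
    x ∈ S :=
  inv_smul_smul₀ hk x ▸ ZMod.smul_mem h k⁻¹

lemma SL2subgroup_eq_ker_det (R : Type*) [CommRing R] :
    SL2subgroup R = (GeneralLinearGroup.det : GL (Fin 2) R →* Rˣ).ker := by
  ext u
  constructor
  · rintro ⟨s, rfl⟩
    exact Units.ext s.prop
  · intro hu
    exact ⟨⟨u, congrArg Units.val hu⟩, Units.ext rfl⟩

lemma glMap_mem_SL2subgroup {R S : Type*} [CommRing R] [CommRing S] (f : R →+* S)
    {u : GL (Fin 2) R} (hu : u ∈ SL2subgroup R) : glMap f u ∈ SL2subgroup S := by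
  obtain ⟨s, rfl⟩ := hu
  exact ⟨SpecialLinearGroup.map f s, Units.ext rfl⟩

def diagNegOneOne : GL (Fin 2) (ZMod 3) :=
  ⟨!![-1, 0; 0, 1], !![-1, 0; 0, 1], by decide, by decide⟩

-- Conjugation by `diag(-1, 1)` negates the off-diagonal entry, and `-2c = c` in `𝔽₃`.
lemma commutator_diagNegOneOne_transvection {i j : Fin 2} (h : i ≠ j) (c : ZMod 3) :
    ⁅diagNegOneOne, SpecialLinearGroup.toGL (SpecialLinearGroup.transvection h c)⁆ =
      SpecialLinearGroup.toGL (SpecialLinearGroup.transvection h c) := by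
  rw [commutatorElement_def, ← map_inv, SpecialLinearGroup.transvection_inv]
  refine Units.ext ?_
  simp only [Units.val_mul, SpecialLinearGroup.coe_GL_coe_matrix,
    SpecialLinearGroup.transvection_coe]
  fin_cases i <;> fin_cases j <;> first | exact absurd rfl h | (clear h; revert c; decide)

lemma SL2subgroup_le_commutator : SL2subgroup (ZMod 3) ≤ commutator (GL (Fin 2) (ZMod 3)) := by
  rintro _ ⟨s, rfl⟩
  refine SL2.transvection_induction (fun s => SpecialLinearGroup.toGL s ∈ _) (fun i j h c => ?_)
    (fun A B hA hB => by rw [map_mul]; exact mul_mem hA hB) s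
  rw [← commutator_diagNegOneOne_transvection h c]
  exact Subgroup.commutator_mem_commutator (Subgroup.mem_top _) (Subgroup.mem_top _)

abbrev castHom93 : ZMod 9 →+* ZMod 3 := ZMod.castHom (by norm_num) (ZMod 3)

def timesThree : ZMod 3 →+ ZMod 9 where
  toFun a := 3 * a.val
  map_zero' := rfl
  map_add' := by decide

lemma timesThree_mul_timesThree (a b : ZMod 3) : timesThree a * timesThree b = 0 := by
  revert a b; decide

lemma mul_timesThree (x : ZMod 9) (a : ZMod 3) :
    x * timesThree a = timesThree (castHom93 x * a) := by
  revert x a; decide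

lemma timesThree_mul (a : ZMod 3) (x : ZMod 9) :
    timesThree a * x = timesThree (a * castHom93 x) := by
  revert x a; decide

lemma castHom93_timesThree (a : ZMod 3) : castHom93 (timesThree a) = 0 := by
  revert a; decide

lemma timesThree_injective : Function.Injective timesThree := by
  decide

lemma exists_timesThree_of_castHom93_eq_zero {x : ZMod 9} (hx : castHom93 x = 0) :
    ∃ a, timesThree a = x := by
  revert x; decide

section CongruenceKernel

variable {n : Type*}

lemma map_timesThree_map_castHom93 (A : Matrix n n (ZMod 3)) :
    (A.map timesThree).map castHom93 = 0 := by
  ext i j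
  simp only [map_apply, castHom93_timesThree, Matrix.zero_apply]

variable [Fintype n]

lemma map_timesThree_mul_map_timesThree (A B : Matrix n n (ZMod 3)) :
    A.map timesThree * B.map timesThree = 0 := by
  ext i j
  simp [mul_apply, timesThree_mul_timesThree]

lemma mul_map_timesThree (X : Matrix n n (ZMod 9)) (A : Matrix n n (ZMod 3)) :
    X * A.map timesThree = (X.map castHom93 * A).map timesThree := by
  ext i j
  simp [mul_apply, mul_timesThree, map_sum]

lemma map_timesThree_mul (A : Matrix n n (ZMod 3)) (X : Matrix n n (ZMod 9)) :
    A.map timesThree * X = (A * X.map castHom93).map timesThree := by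
  ext i j
  simp [mul_apply, timesThree_mul, map_sum]

variable [DecidableEq n]

lemma one_add_map_timesThree_mul (A B : Matrix n n (ZMod 3)) :
    (1 + A.map timesThree) * (1 + B.map timesThree) = 1 + (A + B).map timesThree := by
  rw [add_mul, mul_add, mul_add, map_timesThree_mul_map_timesThree, Matrix.map_add _ (map_add _)]
  noncomm_ring

abbrev reduceGL : GL n (ZMod 9) →* GL n (ZMod 3) := GeneralLinearGroup.map castHom93

lemma coe_reduceGL (u : GL n (ZMod 9)) :
    (reduceGL u : Matrix n n (ZMod 3)) = (u : Matrix n n (ZMod 9)).map castHom93 := rfl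

def oneAddThreeMul : Multiplicative (Matrix n n (ZMod 3)) →* GL n (ZMod 9) where
  toFun A :=
    ⟨1 + A.toAdd.map timesThree, 1 + (-A.toAdd).map timesThree,
      by rw [one_add_map_timesThree_mul, add_neg_cancel, Matrix.map_zero _ (map_zero _), add_zero],
      by rw [one_add_map_timesThree_mul, neg_add_cancel, Matrix.map_zero _ (map_zero _), add_zero]⟩
  map_one' := Units.ext <| by simp
  map_mul' A B := Units.ext <| by simp [one_add_map_timesThree_mul]

@[simp]
lemma coe_oneAddThreeMul (A : Multiplicative (Matrix n n (ZMod 3))) :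
    (oneAddThreeMul A : Matrix n n (ZMod 9)) = 1 + A.toAdd.map timesThree := rfl

lemma oneAddThreeMul_injective : Function.Injective (oneAddThreeMul (n := n)) := by
  intro A B h
  have h' := congrArg (fun u : GL n (ZMod 9) => (u : Matrix n n (ZMod 9))) h
  simp only [coe_oneAddThreeMul, add_right_inj] at h'
  exact map_injective timesThree_injective h'

lemma range_oneAddThreeMul : (oneAddThreeMul (n := n)).range = (reduceGL (n := n)).ker := by
  ext u
  constructor
  · rintro ⟨A, rfl⟩
    refine Units.ext ?_
    rw [coe_reduceGL, coe_oneAddThreeMul, Matrix.map_add _ (map_add _),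
      Matrix.map_one _ (map_zero _) (map_one _), map_timesThree_map_castHom93, add_zero,
      Units.val_one]
  · intro hu
    have hred : ((u : Matrix n n (ZMod 9)) - 1).map castHom93 = 0 := by
      rw [Matrix.map_sub _ (map_sub _), Matrix.map_one _ (map_zero _) (map_one _), ← coe_reduceGL,
        MonoidHom.mem_ker.1 hu, Units.val_one, sub_self]
    choose A hA using fun i j =>
      exists_timesThree_of_castHom93_eq_zero (congrFun (congrFun hred i) j)
    exact ⟨.ofAdd (of A), Units.ext <| by ext i j; simp [hA]⟩

lemma conj_oneAddThreeMul (u : GL n (ZMod 9)) (A : Matrix n n (ZMod 3)) :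
    u * oneAddThreeMul (.ofAdd A) * u⁻¹ =
      oneAddThreeMul (.ofAdd ((reduceGL u : Matrix n n (ZMod 3)) * A *
        (↑(reduceGL u)⁻¹ : Matrix n n (ZMod 3)))) := by
  refine Units.ext ?_
  simp only [Units.val_mul, coe_oneAddThreeMul, toAdd_ofAdd, mul_add, add_mul, mul_one,
    Units.mul_inv, mul_map_timesThree, map_timesThree_mul]
  rfl

lemma oneAddThreeMul_conj_mem {H : Subgroup (GL n (ZMod 9))} (hH : H.map reduceGL = ⊤)
    (g : GL n (ZMod 3)) {A : Matrix n n (ZMod 3)} (hA : oneAddThreeMul (.ofAdd A) ∈ H) :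
    oneAddThreeMul (.ofAdd ((g : Matrix n n (ZMod 3)) * A * (↑g⁻¹ : Matrix n n (ZMod 3)))) ∈ H := by
  obtain ⟨u, hu, rfl⟩ : g ∈ H.map reduceGL := hH ▸ Subgroup.mem_top g
  rw [← conj_oneAddThreeMul]
  exact mul_mem (mul_mem hu hA) (inv_mem hu)

end CongruenceKernel

lemma det_oneAddThreeMul (A : Matrix (Fin 2) (Fin 2) (ZMod 3)) :
    (oneAddThreeMul (.ofAdd A) : Matrix (Fin 2) (Fin 2) (ZMod 9)).det =
      1 + timesThree A.trace := by
  rw [coe_oneAddThreeMul, det_fin_two, trace_fin_two]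
  simp only [toAdd_ofAdd, Matrix.add_apply, one_apply_eq, one_apply_ne zero_ne_one,
    one_apply_ne one_ne_zero, map_apply, map_add, zero_add]
  linear_combination timesThree_mul_timesThree (A 0 0) (A 1 1) -
    timesThree_mul_timesThree (A 0 1) (A 1 0)

lemma trace_eq_zero_of_oneAddThreeMul_mem_SL2subgroup {A : Matrix (Fin 2) (Fin 2) (ZMod 3)}
    (hA : oneAddThreeMul (.ofAdd A) ∈ SL2subgroup (ZMod 9)) : A.trace = 0 := by
  rw [SL2subgroup_eq_ker_det, MonoidHom.mem_ker, Units.ext_iff, GeneralLinearGroup.val_det_apply,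
    det_oneAddThreeMul, Units.val_one, add_eq_left] at hA
  exact timesThree_injective (hA.trans (map_zero _).symm)

lemma card_ker_reduceGL : Nat.card (reduceGL (n := Fin 2)).ker = 81 := by
  rw [← range_oneAddThreeMul,
    ← Nat.card_congr (MonoidHom.ofInjective oneAddThreeMul_injective).toEquiv,
    Nat.card_eq_fintype_card]
  rfl

section ConjugationStable

variable {S : AddSubgroup (Matrix (Fin 2) (Fin 2) (ZMod 3))}

def conjUpperSub (X : Matrix (Fin 2) (Fin 2) (ZMod 3)) : Matrix (Fin 2) (Fin 2) (ZMod 3) :=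
  !![1, 1; 0, 1] * X * !![1, -1; 0, 1] - X

lemma conjUpperSub_conjUpperSub (a b c d : ZMod 3) :
    conjUpperSub (conjUpperSub !![a, b; c, d]) = c • !![0, 1; 0, 0] := by
  revert a b c d; decide

lemma conjUpperSub_of_lower_eq_zero (a b d : ZMod 3) :
    conjUpperSub !![a, b; 0, d] = (d - a) • !![0, 1; 0, 0] := by
  revert a b d; decide

lemma scalar_mem_zmultiples_one (a : ZMod 3) : !![a, 0; 0, a] ∈ AddSubgroup.zmultiples 1 :=
  ⟨a.val, by revert a; decide⟩

variable (hS : ∀ g : SL(2, ZMod 3), ∀ A ∈ S, (g : Matrix (Fin 2) (Fin 2) (ZMod 3)) * A *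
  ((g⁻¹ : SL(2, ZMod 3)) : Matrix (Fin 2) (Fin 2) (ZMod 3)) ∈ S)
include hS

lemma conj_mem_of_det_eq_one {A : Matrix (Fin 2) (Fin 2) (ZMod 3)} (hA : A ∈ S)
    {a b c d : ZMod 3} (hdet : a * d - b * c = 1) : !![a, b; c, d] * A * !![d, -b; -c, a] ∈ S := by
  have h := hS ⟨!![a, b; c, d], by rwa [det_fin_two_of]⟩ A hA
  change !![a, b; c, d] * A * adjugate !![a, b; c, d] ∈ S at h
  rwa [adjugate_fin_two_of] at h

lemma conjUpperSub_mem {X : Matrix (Fin 2) (Fin 2) (ZMod 3)} (hX : X ∈ S) :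
    conjUpperSub X ∈ S := by
  have h := conj_mem_of_det_eq_one hS hX (a := 1) (b := 1) (c := 0) (d := 1) (by decide)
  rw [neg_zero] at h
  exact sub_mem h hX

lemma single_mem_of_lower_ne_zero {A : Matrix (Fin 2) (Fin 2) (ZMod 3)} (hA : A ∈ S)
    (hc : A 1 0 ≠ 0) : !![0, 1; 0, 0] ∈ S := by
  have h := conjUpperSub_mem hS (conjUpperSub_mem hS hA)
  rw [eta_fin_two A, conjUpperSub_conjUpperSub] at h
  exact AddSubgroup.mem_of_zmod_smul_mem hc h

lemma single_mem_of_not_mem_zmultiples {A : Matrix (Fin 2) (Fin 2) (ZMod 3)} (hA : A ∈ S)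
    (hA1 : A ∉ AddSubgroup.zmultiples 1) : !![0, 1; 0, 0] ∈ S := by
  rw [eta_fin_two A] at hA hA1
  generalize A 0 0 = a, A 0 1 = b, A 1 0 = c, A 1 1 = d at hA hA1
  by_cases hc : c = 0
  swap
  · exact single_mem_of_lower_ne_zero hS hA hc
  subst hc
  by_cases had : d - a = 0
  swap
  · have h := conjUpperSub_mem hS hA
    rw [conjUpperSub_of_lower_eq_zero] at h
    exact AddSubgroup.mem_of_zmod_smul_mem had h
  obtain rfl : d = a := sub_eq_zero.1 had
  by_cases hb : b = 0
  · subst hb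
    exact absurd (scalar_mem_zmultiples_one d) hA1
  · have h := conj_mem_of_det_eq_one hS hA (a := 0) (b := -1) (c := 1) (d := 0) (by decide)
    exact single_mem_of_lower_ne_zero hS h (by simpa using hb)

lemma trace_eq_zero_mem_of_single_mem (hE : !![0, 1; 0, 0] ∈ S)
    {B : Matrix (Fin 2) (Fin 2) (ZMod 3)} (hB : B.trace = 0) : B ∈ S := by
  have hE' : !![-1, 1; -1, 1] ∈ S := by
    convert conj_mem_of_det_eq_one hS hE (a := 1) (b := 0) (c := 1) (d := 1) (by decide) using 1
    decide
  have hF : !![0, 0; -1, 0] ∈ S := by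
    convert conj_mem_of_det_eq_one hS hE (a := 0) (b := -1) (c := 1) (d := 0) (by decide) using 1
    decide
  have hB11 : B 1 1 = -B 0 0 := eq_neg_of_add_eq_zero_right (by rwa [trace_fin_two] at hB)
  rw [eta_fin_two B, hB11]
  generalize B 0 0 = a, B 0 1 = b, B 1 0 = c
  have hspan : !![a, b; c, -a] =
      (a + b) • !![0, 1; 0, 0] + (-a) • !![-1, 1; -1, 1] + (a - c) • !![0, 0; -1, 0] := by
    revert a b c; decide
  rw [hspan]
  exact add_mem (add_mem (ZMod.smul_mem hE _) (ZMod.smul_mem hE' _)) (ZMod.smul_mem hF _)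

theorem le_zmultiples_one_or_trace_eq_zero_mem :
    S ≤ AddSubgroup.zmultiples 1 ∨
      ∀ B : Matrix (Fin 2) (Fin 2) (ZMod 3), B.trace = 0 → B ∈ S := by
  by_cases h : S ≤ AddSubgroup.zmultiples 1
  · exact .inl h
  · obtain ⟨A, hA, hA1⟩ := SetLike.not_le_iff_exists.1 h
    exact .inr fun B hB =>
      trace_eq_zero_mem_of_single_mem hS (single_mem_of_not_mem_zmultiples hS hA hA1) hB

end ConjugationStable

section

variable {H : Subgroup (GL (Fin 2) (ZMod 9))}

lemma SL2subgroup_le_of_trace_eq_zero (hH : H.map reduceGL = ⊤)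
    (htr : ∀ A : Matrix (Fin 2) (Fin 2) (ZMod 3), A.trace = 0 → oneAddThreeMul (.ofAdd A) ∈ H) :
    SL2subgroup (ZMod 9) ≤ H := by
  have hcomm : commutator (GL (Fin 2) (ZMod 3)) ≤ (H ⊓ SL2subgroup (ZMod 9)).map reduceGL := by
    rw [commutator_def, ← hH, ← Subgroup.map_commutator, SL2subgroup_eq_ker_det]
    exact Subgroup.map_mono (le_inf (Subgroup.commutator_le_self H)
      ((Subgroup.commutator_mono le_top le_top).trans (Abelianization.commutator_subset_ker _)))
  intro u hu
  obtain ⟨h, ⟨hH, hdet⟩, hh⟩ :=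
    hcomm (SL2subgroup_le_commutator (glMap_mem_SL2subgroup castHom93 hu))
  obtain ⟨A, hA⟩ : u * h⁻¹ ∈ oneAddThreeMul.range := by
    rw [range_oneAddThreeMul, MonoidHom.mem_ker, map_mul, map_inv, hh, mul_inv_cancel]
  have hA' : oneAddThreeMul A ∈ SL2subgroup (ZMod 9) := hA ▸ mul_mem hu (inv_mem hdet)
  rw [← inv_mul_cancel_right u h, ← hA]
  exact mul_mem (htr _ (trace_eq_zero_of_oneAddThreeMul_mem_SL2subgroup hA')) hH

lemma card_inf_ker_dvd_three
    (hH : (H.comap oneAddThreeMul).toAddSubgroup' ≤ AddSubgroup.zmultiples 1) :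
    Nat.card (H ⊓ reduceGL.ker : Subgroup (GL (Fin 2) (ZMod 9))) ∣ 3 := by
  rw [← range_oneAddThreeMul, inf_comm, ← Subgroup.map_comap_eq,
    Subgroup.card_map_of_injective oneAddThreeMul_injective]
  have hone : addOrderOf (1 : Matrix (Fin 2) (Fin 2) (ZMod 3)) = 3 :=
    CharP.eq _ (CharP.addOrderOf_one _) (Matrix.charP 3)
  exact (AddSubgroup.card_dvd_of_le hH).trans (by rw [Nat.card_zmultiples, hone])

end

/-- Let `H ⊆ GL₂(ℤ/9ℤ)` be a subgroup surjecting onto `GL₂(ℤ/3ℤ)` and with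
`SL₂(ℤ/9ℤ) ⊄ H`.  Then `27` divides `[GL₂(ℤ/9ℤ) : H]`. -/
theorem statement19 (H : Subgroup (GL (Fin 2) (ZMod 9)))
    (hsurj : Subgroup.map (glMap (ZMod.castHom (show 3 ∣ 9 by norm_num) (ZMod 3))) H = ⊤)
    (hSL : ¬ SL2subgroup (ZMod 9) ≤ H) :
    27 ∣ H.index := by
  have hrange : H.map reduceGL = reduceGL.range :=
    le_antisymm (Subgroup.map_le_range _ _) (hsurj ▸ le_top)
  let S := (H.comap oneAddThreeMul).toAddSubgroup'
  have hS : ∀ g : SL(2, ZMod 3), ∀ A ∈ S, (g : Matrix (Fin 2) (Fin 2) (ZMod 3)) * A *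
      ((g⁻¹ : SL(2, ZMod 3)) : Matrix (Fin 2) (Fin 2) (ZMod 3)) ∈ S :=
    fun g _ hA => oneAddThreeMul_conj_mem hsurj (SpecialLinearGroup.toGL g) hA
  rcases le_zmultiples_one_or_trace_eq_zero_mem hS with hscalar | htr
  · have hindex := Subgroup.index_mul_card_inf_ker reduceGL hrange
    rw [card_ker_reduceGL] at hindex
    rcases (Nat.dvd_prime Nat.prime_three).1 (card_inf_ker_dvd_three hscalar) with h | h <;>
      rw [h] at hindex <;> omega
  · exact absurd (SL2subgroup_le_of_trace_eq_zero hsurj htr) hSL
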